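/- arXiv:1611.05785 — 8 statements merged into one kernel-verified Lean document; each statement's English description precedes it below -/
import Mathlib

section
/- Let Q be a right Bol loop. Then for all u, v in Q and all positive integers m, R_{uv}·(R_v^{-1}·R_{uv})^{m-1} = R_{v L_u^m}, where R_x and L_x denote the right and left translation maps by x, and L_u^m denotes the m-th iterate of L_u. -/
/-- A right Bol loop. -/
class RightBolLoop (Q : Type*) extends Mul Q, One Q, Inv Q where
  one_mul : ∀ a : Q, 1 * a = a
  mul_one : ∀ a : Q, a * 1 = a
  mulLeft_bij : ∀ a : Q, Function.Bijective (fun x : Q => a * x)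
  mulRight_bij : ∀ a : Q, Function.Bijective (fun x : Q => x * a)
  mul_inv : ∀ a : Q, a * a⁻¹ = 1
  inv_mul : ∀ a : Q, a⁻¹ * a = 1
  rbol : ∀ w u v : Q, ((w * u) * v) * u = w * ((u * v) * u)

variable {Q : Type*} [RightBolLoop Q]

/-- The right translation `R_a : x ↦ x·a` as a permutation of `Q`. -/
noncomputable def Rt (a : Q) : Equiv.Perm Q :=
  Equiv.ofBijective _ (RightBolLoop.mulRight_bij a)

/-- The left translation `L_a : x ↦ a·x` as a permutation of `Q`. -/
noncomputable def Lt (a : Q) : Equiv.Perm Q :=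
  Equiv.ofBijective _ (RightBolLoop.mulLeft_bij a)

lemma Rt_apply (a x : Q) : Rt a x = x * a := rfl
lemma Lt_apply (a x : Q) : Lt a x = a * x := rfl

/-- Right inverse property. -/
lemma rip (a c : Q) : (a * c) * c⁻¹ = a := by
  have h := RightBolLoop.rbol a c c⁻¹
  rw [RightBolLoop.mul_inv, RightBolLoop.one_mul] at h
  exact (RightBolLoop.mulRight_bij c).injective h

lemma Rt_inv (v : Q) : (Rt v)⁻¹ = Rt (v⁻¹ : Q) := by
  have h : Rt (v⁻¹ : Q) * Rt v = 1 := by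
    ext x
    simp only [Equiv.Perm.mul_apply, Rt_apply, Equiv.Perm.one_apply]
    exact rip x v
  exact (inv_eq_of_mul_eq_one_left h)

/-- Operator form of the right Bol identity. -/
lemma bol_op (u v : Q) : Rt u * Rt v * Rt u = Rt ((u * v) * u) := by
  ext w
  simp only [Equiv.Perm.mul_apply, Rt_apply]
  exact RightBolLoop.rbol w u v

lemma aux_key (u v : Q) : ∀ n : ℕ,
    (Rt (u * v) * (Rt v)⁻¹) ^ n * Rt (u * v) = Rt ((Lt u ^ (n + 1)) v) := by
  intro n
  induction n using Nat.twoStepInduction with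
  | zero =>
    simp [pow_zero, one_mul, pow_one, Lt_apply]
  | one =>
    have h1 : (Rt (u * v) * (Rt v)⁻¹) ^ 1 * Rt (u * v)
        = Rt (u * v) * Rt (v⁻¹ : Q) * Rt (u * v) := by
      rw [pow_one, Rt_inv]
    have h2 : ((Lt u) ^ (1 + 1)) v = u * (u * v) := rfl
    rw [h1, bol_op, rip u v, h2]
  | more n ih ih1 =>
    set A := Rt (u * v) * (Rt v)⁻¹ with hA
    set R := Rt (u * v) with hR
    have grp : A ^ (n + 2) * R = (A ^ (n + 1) * R) * (A ^ n * R)⁻¹ * (A ^ (n + 1) * R) := by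
      group
    set x : Q := (Lt u ^ (n + 1)) v with hx
    set y : Q := (Lt u ^ (n + 2)) v with hy
    have hyx : y = u * x := by
      rw [hy, hx, pow_succ']
      rfl
    have hu : y * x⁻¹ = u := by rw [hyx]; exact rip u x
    have hfin : (Lt u ^ (n + 2 + 1)) v = u * y := by
      rw [pow_succ']
      rfl
    rw [grp, ih, ih1, Rt_inv, bol_op, hu, hfin]

/-- `R_{uv}·(R_v⁻¹·R_{uv})^{m-1} = R_{v L_u^m}` for all `u, v` and `m ≥ 1`.
Here words of translations are composed left-to-right as in the paper, so the
paper's word `R_{uv}(R_v⁻¹ R_{uv})^{m-1}` is the permutation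
`(R_{uv} * R_v⁻¹)^{m-1} * R_{uv}` with Mathlib's right-to-left composition,
and `v L_u^m` is the `m`-th iterate of `L_u` applied to `v`. -/
theorem stmt1 (u v : Q) (m : ℕ) (hm : 0 < m) :
    (Rt (u * v) * (Rt v)⁻¹) ^ (m - 1) * Rt (u * v) = Rt ((Lt u ^ m) v) := by
  cases m with
  | zero => omega
  | succ n => simpa using aux_key u v n
end

section
/- Let Q be a right Bol loop and define T_u = R_u L_u^{-1}. Then for all u, v in Q and all k ≥ 0, (v T_u)^k = (u^{-1}·((u^2) L_v^k))·u^{-1}. -/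
variable {Q : Type*} [RightBolLoop Q]

/-- Left division: `ldiv u v = u \ v` is the unique `x` with `u·x = v`. -/
noncomputable def ldiv (u v : Q) : Q := (Lt u).symm v

/-- The map `T_u = R_u L_u⁻¹`, i.e. `v T_u = u \ (v·u)`. -/
noncomputable def Tm (u v : Q) : Q := ldiv u (v * u)

/-- Powers in the loop: `lpow a n = a^n` (well defined by power associativity
in right Bol loops). -/
def lpow (a : Q) : ℕ → Q
  | 0 => 1
  | n + 1 => lpow a n * a

section Aux



lemma ldiv_mul' (u x : Q) : u * ldiv u x = x := (Lt u).apply_symm_apply x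

lemma rmul_inj (a : Q) : Function.Injective (fun x : Q => x * a) :=
  (RightBolLoop.mulRight_bij a).injective

lemma rip1 (w a : Q) : (w * a) * a⁻¹ = w := by
  apply rmul_inj a
  show ((w * a) * a⁻¹) * a = w * a
  rw [RightBolLoop.rbol, RightBolLoop.mul_inv, RightBolLoop.one_mul]

lemma rip2 (w a : Q) : (w * a⁻¹) * a = w := by
  apply rmul_inj a⁻¹
  show ((w * a⁻¹) * a) * a⁻¹ = w * a⁻¹
  exact rip1 (w * a⁻¹) a

lemma ralt (w a : Q) : (w * a) * a = w * (a * a) := by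
  have h := RightBolLoop.rbol w a 1
  rwa [RightBolLoop.mul_one, RightBolLoop.mul_one] at h

/-- `((w·d)·(d\c))·d = w·(c·d)`. -/
lemma T3 (w c d : Q) : ((w * d) * ldiv d c) * d = w * (c * d) := by
  rw [RightBolLoop.rbol, ldiv_mul']

/-- Single-step invariance: `R_{(vd)\v} R_{vd} = R_{d\v} R_d` pointwise. -/
lemma SS (x v d : Q) :
    (x * ldiv (v * d) v) * (v * d) = (x * ldiv d v) * d := by
  have h1 : (x * ldiv (v * d) v) * (v * d)
      = (x * (v * d)⁻¹) * (v * (v * d)) := by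
    conv_lhs => rw [← rip2 x (v * d)]
    rw [T3]
  have h2 : v * (v * d) = ((v * d) * d⁻¹) * (v * d) := by rw [rip1]
  have h3 : (x * (v * d)⁻¹) * (((v * d) * d⁻¹) * (v * d))
      = (x * d⁻¹) * (v * d) := by
    rw [← RightBolLoop.rbol, rip2]
  have h4 : (x * ldiv d v) * d = (x * d⁻¹) * (v * d) := by
    conv_lhs => rw [← rip2 x d]
    rw [T3]
  rw [h1, h2, h3, h4]

lemma inv_lemma (u v : Q) : ∀ k : ℕ, ∀ x : Q,
    (x * ldiv ((Lt v ^ k) (u * u)) v) * ((Lt v ^ k) (u * u))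
      = (x * ldiv (u * u) v) * (u * u) := by
  intro k
  induction k with
  | zero => intro x; rw [pow_zero]; rfl
  | succ k ih =>
    intro x
    have hd : (Lt v ^ (k + 1)) (u * u) = v * ((Lt v ^ k) (u * u)) := by
      rw [pow_succ']; rfl
    rw [hd, SS, ih]

lemma X2 (y u v : Q) :
    (y * ldiv (u * u) v) * (u * u) = ((y * u⁻¹) * u⁻¹) * (v * (u * u)) := by
  have hy : ((y * u⁻¹) * u⁻¹) * (u * u) = y := by
    rw [← ralt, rip2, rip2]
  conv_lhs => rw [← hy]
  rw [T3]

lemma main_step (u v : Q) (k : ℕ) (w : Q) :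
    (((w * ((Lt v ^ k) (u * u))) * u⁻¹) * u⁻¹) * (v * (u * u))
      = w * (v * ((Lt v ^ k) (u * u))) := by
  rw [← T3 w v ((Lt v ^ k) (u * u)), inv_lemma u v k, X2]

lemma mul_Tm (w u v : Q) :
    w * Tm u v = ((w * u⁻¹) * (v * (u * u))) * u⁻¹ := by
  have hu : u * Tm u v = v * u := ldiv_mul' u (v * u)
  have h : (w * Tm u v) * u = (w * u⁻¹) * (v * (u * u)) := by
    conv_lhs => rw [← rip2 w u]
    rw [RightBolLoop.rbol, hu, ralt]
  rw [← h, rip1]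

end Aux

/-- `(v T_u)^k = (u⁻¹ · ((u²) L_v^k)) · u⁻¹` for all `u, v ∈ Q` and `k ≥ 0`. -/
theorem stmt2 (u v : Q) (k : ℕ) :
    lpow (Tm u v) k = (u⁻¹ * ((Lt v ^ k) (u * u))) * u⁻¹ := by
  induction k with
  | zero =>
    show (1 : Q) = (u⁻¹ * ((Lt v ^ 0) (u * u))) * u⁻¹
    rw [pow_zero]
    have h : u⁻¹ * (u * u) = u := by
      have h2 := RightBolLoop.rbol (u⁻¹ : Q) u 1
      rw [RightBolLoop.inv_mul, RightBolLoop.mul_one, RightBolLoop.one_mul,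
        RightBolLoop.mul_one] at h2
      exact h2.symm
    show (1 : Q) = (u⁻¹ * (u * u)) * u⁻¹
    rw [h, RightBolLoop.mul_inv]
  | succ k ih =>
    show lpow (Tm u v) k * Tm u v = _
    rw [ih, mul_Tm, main_step u v k u⁻¹]
    have hd : (Lt v ^ (k + 1)) (u * u) = v * ((Lt v ^ k) (u * u)) := by
      rw [pow_succ']; rfl
    rw [hd]
end

section
/- Let Q be a uniquely 2-divisible right Bol loop (i.e., the squaring map is a bijection of Q). For all v in Q and integers m, n, the equation (u·v^n)·u = v^m has the unique solution u = v^{(m-n)/2}, where (m-n)/2 is interpreted via the unique square root. -/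
variable {Q : Type*} [RightBolLoop Q]

/-- Integer powers in a loop with inverses. -/
def lzpow (a : Q) : ℤ → Q
  | Int.ofNat n => lpow a n
  | Int.negSucc n => (lpow a (n + 1))⁻¹

namespace RightBolLoop

noncomputable def rmul (a : Q) : Equiv.Perm Q := Equiv.ofBijective _ (mulRight_bij a)

lemma rmul_apply (a x : Q) : rmul a x = x * a := rfl

lemma rmul_injective : Function.Injective (rmul : Q → Equiv.Perm Q) := fun a b h => by
  simpa only [rmul_apply, one_mul] using congrArg (· 1) h

lemma rmul_mul_rmul_mul_rmul (u a : Q) : rmul u * rmul a * rmul u = rmul ((u * a) * u) :=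
  Equiv.ext fun w => rbol w u a

lemma mul_mul_eq_iff (u a b : Q) : (u * a) * u = b ↔ rmul u * rmul a * rmul u = rmul b := by
  rw [rmul_mul_rmul_mul_rmul, rmul_injective.eq_iff]

lemma rmul_one : rmul (1 : Q) = 1 :=
  Equiv.ext fun w => mul_one w

lemma rmul_mul_self (u : Q) : rmul (u * u) = rmul u * rmul u := by
  simpa only [rmul_one, mul_one, _root_.mul_one] using (rmul_mul_rmul_mul_rmul u 1).symm

lemma rmul_inv (a : Q) : rmul a⁻¹ = (rmul a)⁻¹ := by
  refine eq_inv_of_mul_eq_one_left (Equiv.ext fun w => (rmul a).injective ?_)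
  show ((w * a) * a⁻¹) * a = w * a
  rw [rbol, mul_inv, one_mul]

lemma lpow_eq_pow_rmul_one (a : Q) (k : ℕ) : lpow a k = (rmul a ^ k) 1 := by
  induction k with
  | zero => rfl
  | succ k ih => rw [pow_succ', Equiv.Perm.mul_apply, ← ih, rmul_apply, lpow]

lemma rmul_lpow (a : Q) (k : ℕ) : rmul (lpow a k) = rmul a ^ k := by
  induction k using Nat.twoStepInduction with
  | zero => exact rmul_one
  | one => simp only [lpow, one_mul, pow_one]
  | more k ih _ =>
    have h : lpow a (k + 2) = (a * lpow a k) * a := by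
      rw [lpow_eq_pow_rmul_one,
        show rmul a ^ (k + 2) = rmul a * rmul (lpow a k) * rmul a by rw [ih]; group]
      simp only [Equiv.Perm.mul_apply, rmul_apply, one_mul]
    rw [h, ← rmul_mul_rmul_mul_rmul, ih]
    group

lemma rmul_lzpow (a : Q) (k : ℤ) : rmul (lzpow a k) = rmul a ^ k := by
  cases k with
  | ofNat k => exact rmul_lpow a k
  | negSucc k => rw [lzpow, rmul_inv, rmul_lpow, zpow_negSucc]

lemma rmul_lzpow_mul_self (t : Q) (k : ℤ) : rmul (lzpow (t * t) k) = rmul t ^ (2 * k) := by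
  rw [rmul_lzpow, rmul_mul_self, ← sq, ← zpow_natCast, ← zpow_mul, Nat.cast_ofNat]

section UniquelyTwoDivisible

variable (hsq : Function.Bijective fun x : Q => x * x)
include hsq

lemma eq_of_rmul_mul_self_eq {a b : Q} (h : rmul a * rmul a = rmul b * rmul b) : a = b :=
  hsq.injective <| rmul_injective <| by simpa only [rmul_mul_self] using h

lemma mul_self_eq_lzpow_mul_self_iff (t u : Q) (k : ℤ) :
    u * u = lzpow (t * t) k ↔ rmul u = rmul t ^ k := by
  have hsplit : rmul t ^ (2 * k) = rmul (lzpow t k) * rmul (lzpow t k) := by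
    rw [rmul_lzpow]; group
  rw [← rmul_injective.eq_iff, rmul_mul_self, rmul_lzpow_mul_self, hsplit, ← rmul_lzpow]
  exact ⟨fun h => by rw [eq_of_rmul_mul_self_eq hsq h], fun h => by rw [h]⟩

lemma mul_lzpow_mul_eq_lzpow_iff (t u : Q) (m n : ℤ) :
    (u * lzpow (t * t) n) * u = lzpow (t * t) m ↔ rmul u = rmul t ^ (m - n) := by
  rw [mul_mul_eq_iff, rmul_lzpow_mul_self, rmul_lzpow_mul_self]
  set T := rmul t
  refine ⟨fun h => ?_, fun h => by rw [h]; group⟩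
  have hconj : T ^ n * rmul u * T ^ n = rmul ((lzpow t n * u) * lzpow t n) := by
    rw [← rmul_lzpow, rmul_mul_rmul_mul_rmul]
  have hconj_eq : T ^ n * rmul u * T ^ n = T ^ (m + n) := by
    rw [hconj, ← rmul_lzpow t (m + n)]
    congr 1
    apply eq_of_rmul_mul_self_eq hsq
    rw [← hconj, rmul_lzpow]
    calc T ^ n * rmul u * T ^ n * (T ^ n * rmul u * T ^ n)
        = T ^ n * (rmul u * T ^ (2 * n) * rmul u) * T ^ n := by group
      _ = T ^ (m + n) * T ^ (m + n) := by rw [h]; group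
  calc rmul u = T ^ (-n) * (T ^ n * rmul u * T ^ n) * T ^ (-n) := by group
    _ = T ^ (m - n) := by rw [hconj_eq]; group

end UniquelyTwoDivisible

end RightBolLoop

/-- In a uniquely 2-divisible right Bol loop, for all `v` and integers `m, n`,
the equation `(u·vⁿ)·u = vᵐ` has the unique solution `u = v^{(m-n)/2}`; that
is, an element `u` solves the equation if and only if `u² = v^{m-n}`,
and by unique 2-divisibility there is exactly one such `u`. -/
theorem stmt5 (hsq : Function.Bijective (fun x : Q => x * x))
    (v : Q) (m n : ℤ) :
    (∃! u : Q, (u * lzpow v n) * u = lzpow v m) ∧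
    (∀ u : Q, (u * lzpow v n) * u = lzpow v m ↔ u * u = lzpow v (m - n)) := by
  open RightBolLoop in
  obtain ⟨t, ht⟩ := hsq.surjective v
  obtain rfl : t * t = v := ht
  have hsol (u : Q) := mul_lzpow_mul_eq_lzpow_iff hsq t u m n
  refine ⟨⟨lzpow t (m - n), (hsol _).2 (rmul_lzpow t _), fun u hu => ?_⟩,
    fun u => (hsol u).trans (mul_self_eq_lzpow_mul_self_iff hsq t u _).symm⟩
  exact rmul_injective (((hsol u).1 hu).trans (rmul_lzpow t _).symm)
end

section
/- Let Q be a uniquely 2-divisible right Bol loop. Define a new operation u∘v = ((v·u^2)·v)^{1/2}. Then (Q,∘) is a right Bruck loop, and powers and inverses in (Q,∘) coincide with those in (Q,·). -/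
variable {Q : Type*} [RightBolLoop Q]

instance : Nonempty Q := ⟨1⟩

/-- The (partial) square root map: `sqrt2 x` is a square root of `x`;
when squaring is bijective it is the unique square root `x^{1/2}`. -/
noncomputable def sqrt2 (x : Q) : Q := Function.invFun (fun y : Q => y * y) x

/-- The associated Bruck operation `u ∘ v = ((v·u²)·v)^{1/2}`. -/
noncomputable def bop (u v : Q) : Q := sqrt2 ((v * (u * u)) * v)

/-- Natural powers with respect to an arbitrary binary operation `f`
with the same identity `1`. -/
def opow (f : Q → Q → Q) (a : Q) : ℕ → Q
  | 0 => 1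
  | n + 1 => f (opow f a n) a

namespace Stmt6Aux

/-- The right translation by `a`, as a permutation. -/
noncomputable def R (a : Q) : Equiv.Perm Q :=
  Equiv.ofBijective (fun x : Q => x * a) (RightBolLoop.mulRight_bij a)

@[simp] lemma R_apply (a x : Q) : R a x = x * a := rfl

lemma R_inj {a b : Q} (h : R a = R b) : a = b := by
  have h1 : R a 1 = R b 1 := by rw [h]
  simpa [RightBolLoop.one_mul] using h1

lemma R_bol (u v : Q) : R u * R v * R u = R ((u * v) * u) := by
  ext x
  simp only [Equiv.Perm.mul_apply, R_apply]
  exact RightBolLoop.rbol x u v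

lemma R_one : R (1 : Q) = 1 := by
  ext x
  simp [RightBolLoop.mul_one]

lemma R_sq (a : Q) : R (a * a) = R a * R a := by
  have h := R_bol a (1 : Q)
  rw [R_one, mul_one, RightBolLoop.mul_one] at h
  exact h.symm

lemma R_inv (a : Q) : R (a⁻¹ : Q) = (R a)⁻¹ := by
  have key : ∀ x : Q, (x * a⁻¹) * a = x := by
    intro x
    have h := RightBolLoop.rbol x a⁻¹ a
    rw [RightBolLoop.inv_mul, RightBolLoop.one_mul] at h
    exact (RightBolLoop.mulRight_bij a⁻¹).injective h
  have hmul : R a * R (a⁻¹ : Q) = 1 := by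
    ext x
    simp only [Equiv.Perm.mul_apply, R_apply, Equiv.Perm.one_apply]
    exact key x
  exact eq_inv_of_mul_eq_one_right hmul

section Sqrt
variable (hsq : Function.Bijective (fun x : Q => x * x))
include hsq

lemma sqrt2_sq (a : Q) : sqrt2 (a * a) = a :=
  Function.leftInverse_invFun hsq.injective a

lemma sq_sqrt2 (a : Q) : sqrt2 a * sqrt2 a = a :=
  Function.invFun_eq (hsq.surjective a)

lemma sq_inj {a b : Q} (h : a * a = b * b) : a = b := hsq.injective h

lemma sqrt2_bij : Function.Bijective (sqrt2 : Q → Q) := by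
  constructor
  · intro x y h
    rw [← sq_sqrt2 hsq x, ← sq_sqrt2 hsq y, h]
  · intro b
    exact ⟨b * b, sqrt2_sq hsq b⟩

lemma bop_sq (u v : Q) : bop u v * bop u v = (v * (u * u)) * v :=
  sq_sqrt2 hsq _

lemma R_bop_sq (u v : Q) :
    R (bop u v) * R (bop u v) = R v * (R u * R u) * R v := by
  rw [← R_sq, bop_sq hsq, ← R_bol, R_sq]

/-- `u ∘ v` is the unique `c` with `c² = (v·u²)·v`. -/
lemma bop_eq_of_sq {u v c : Q} (h : (v * (u * u)) * v = c * c) :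
    bop u v = c := by
  unfold bop
  rw [h, sqrt2_sq hsq]

lemma bop_one_left (a : Q) : bop 1 a = a := by
  apply bop_eq_of_sq hsq
  rw [RightBolLoop.mul_one, RightBolLoop.mul_one]

lemma bop_one_right (a : Q) : bop a 1 = a := by
  apply bop_eq_of_sq hsq
  rw [RightBolLoop.one_mul, RightBolLoop.mul_one]

lemma key2 (a x : Q) :
    (a * (bop a x * bop a x)) * a = ((a * x) * a) * ((a * x) * a) := by
  rw [bop_sq hsq]
  apply R_inj
  simp only [R_sq, ← R_bol]
  group

/-- Bijectivity of `x ↦ a ∘ x`. -/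
lemma bijL (a : Q) : Function.Bijective (fun x : Q => bop a x) := by
  constructor
  · intro x y hxy
    simp only at hxy
    have h2 : ((a * x) * a) * ((a * x) * a) = ((a * y) * a) * ((a * y) * a) := by
      rw [← key2 hsq, ← key2 hsq, hxy]
    have h3 : (a * x) * a = (a * y) * a := sq_inj hsq h2
    have h4 : a * x = a * y := (RightBolLoop.mulRight_bij a).injective h3
    exact (RightBolLoop.mulLeft_bij a).injective h4
  · intro c
    obtain ⟨y, hy⟩ := hsq.surjective ((a * (c * c)) * a)
    obtain ⟨x1, hx1⟩ := (RightBolLoop.mulRight_bij a).surjective y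
    obtain ⟨x, hx⟩ := (RightBolLoop.mulLeft_bij a).surjective x1
    simp only at hy hx1 hx
    refine ⟨x, ?_⟩
    have E : (a * (bop a x * bop a x)) * a = (a * (c * c)) * a := by
      rw [key2 hsq, hx, hx1, hy]
    have h1 : a * (bop a x * bop a x) = a * (c * c) :=
      (RightBolLoop.mulRight_bij a).injective E
    have h2 : bop a x * bop a x = c * c :=
      (RightBolLoop.mulLeft_bij a).injective h1
    exact sq_inj hsq h2

/-- Bijectivity of `x ↦ x ∘ a`. -/
lemma bijR (a : Q) : Function.Bijective (fun x : Q => bop x a) := by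
  have heq : (fun x : Q => bop x a)
      = (sqrt2 ∘ (fun z : Q => z * a) ∘ (fun z : Q => a * z) ∘ fun x : Q => x * x) := rfl
  rw [heq]
  exact (sqrt2_bij hsq).comp ((RightBolLoop.mulRight_bij a).comp
    ((RightBolLoop.mulLeft_bij a).comp hsq))

lemma flex (u v : Q) : bop (bop u v) u = (u * v) * u := by
  apply sq_inj hsq
  apply R_inj
  simp only [R_sq, ← R_bol, R_bop_sq hsq]
  group

lemma bop_bol (w u v : Q) :
    bop (bop (bop w u) v) u = bop w (bop (bop u v) u) := by
  rw [flex hsq u v]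
  apply sq_inj hsq
  apply R_inj
  simp only [R_sq, ← R_bol, R_bop_sq hsq]
  group

lemma bop_inv_right (u : Q) : bop u u⁻¹ = 1 := by
  apply bop_eq_of_sq hsq
  apply R_inj
  simp only [← R_bol, R_sq, R_inv, R_one]
  group

lemma bop_inv_left (u : Q) : bop u⁻¹ u = 1 := by
  apply bop_eq_of_sq hsq
  apply R_inj
  simp only [← R_bol, R_sq, R_inv, R_one]
  group

omit hsq in
lemma inv_mul_inv (c : Q) : c⁻¹ * c⁻¹ = (c * c)⁻¹ := by
  apply R_inj
  rw [R_sq, R_inv, R_inv, ← mul_inv_rev, ← R_sq]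

lemma bop_aip (u v : Q) : (bop u v)⁻¹ = bop u⁻¹ v⁻¹ := by
  apply sq_inj hsq
  rw [inv_mul_inv, bop_sq hsq, bop_sq hsq]
  apply R_inj
  rw [R_inv]
  simp only [← R_bol, R_sq, R_inv]
  group

omit hsq in
lemma Rpow_one (a : Q) : ∀ n : ℕ, ((R a) ^ n) 1 = lpow a n := by
  intro n
  induction n with
  | zero => simp [lpow]
  | succ n ih =>
      rw [pow_succ']
      simp only [Equiv.Perm.mul_apply, ih]
      rfl

omit hsq in
lemma R_lpow (a : Q) : ∀ n : ℕ, R (lpow a n) = (R a) ^ n := by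
  intro n
  induction n using Nat.twoStepInduction with
  | zero => simpa [lpow] using R_one
  | one => simp [lpow, RightBolLoop.one_mul]
  | more n ih _ =>
      have haux : a * lpow a n = lpow a (n + 1) := by
        have h1 : a * lpow a n = ((R a) ^ n) a := by
          rw [← ih]; rfl
        rw [h1]
        have h2 : ((R a) ^ n) a = ((R a) ^ (n + 1)) 1 := by
          rw [pow_succ]
          simp only [Equiv.Perm.mul_apply, R_apply, RightBolLoop.one_mul]
        rw [h2, Rpow_one]
      have h3 : lpow a (n + 2) = (a * lpow a n) * a := by
        rw [haux]; rfl
      rw [h3, ← R_bol, ih]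
      group

lemma bop_lpow (u : Q) (n : ℕ) : bop (lpow u n) u = lpow u (n + 1) := by
  apply bop_eq_of_sq hsq
  apply R_inj
  simp only [← R_bol, R_sq, R_lpow]
  group

end Sqrt
end Stmt6Aux

open Stmt6Aux

/-- Let `Q` be a uniquely 2-divisible right Bol loop and define
`u ∘ v = ((v·u²)·v)^{1/2}`. Then `(Q,∘)` is a right Bruck loop (a loop with
the same identity, satisfying the right Bol identity and the automorphic
inverse property), and powers and inverses in `(Q,∘)` coincide with those in
`(Q,·)`. -/
theorem stmt6 (hsq : Function.Bijective (fun x : Q => x * x)) :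
    (∀ a : Q, bop 1 a = a ∧ bop a 1 = a) ∧
    (∀ a : Q, Function.Bijective (fun x : Q => bop a x)) ∧
    (∀ a : Q, Function.Bijective (fun x : Q => bop x a)) ∧
    (∀ w u v : Q, bop (bop (bop w u) v) u = bop w (bop (bop u v) u)) ∧
    (∀ u : Q, bop u u⁻¹ = 1 ∧ bop u⁻¹ u = 1) ∧
    (∀ u v : Q, (bop u v)⁻¹ = bop u⁻¹ v⁻¹) ∧
    (∀ u : Q, ∀ n : ℕ, opow bop u n = lpow u n) := by
  refine ⟨fun a => ⟨bop_one_left hsq a, bop_one_right hsq a⟩,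
    bijL hsq, bijR hsq, bop_bol hsq,
    fun u => ⟨bop_inv_right hsq u, bop_inv_left hsq u⟩,
    bop_aip hsq, fun u n => ?_⟩
  induction n with
  | zero => rfl
  | succ n ih =>
      show bop (opow bop u n) u = lpow u (n + 1)
      rw [ih, bop_lpow hsq]
end

section
/- Let T be a twisted subgroup of a uniquely 2-divisible group H, let τ be an automorphism of H such that every element of T is inverted by τ (i.e., T ⊆ K_H(τ) = {u ∈ H : uτ = u^{-1}}), and suppose T generates H. Then T = K_H(τ). -/
/-- Let `T` be a twisted subgroup (containing `1`, closed under inverses and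
under `(u,v) ↦ u·v·u`) of a uniquely 2-divisible group `H`, let `τ` be an
automorphism of `H` inverting every element of `T`, and suppose `T`
generates `H`. Then `T` equals the set `K_H(τ)` of anti fixed points of `τ`. -/
theorem stmt7 {H : Type*} [Group H]
    (hsq : Function.Bijective (fun x : H => x * x))
    (T : Set H) (h1 : (1 : H) ∈ T)
    (hinv : ∀ u ∈ T, u⁻¹ ∈ T)
    (htw : ∀ u ∈ T, ∀ v ∈ T, u * v * u ∈ T)
    (τ : H ≃* H)
    (hT : T ⊆ {u : H | τ u = u⁻¹})
    (hgen : Subgroup.closure T = ⊤) :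
    T = {u : H | τ u = u⁻¹} := by
  have key : ∀ h : H, ∀ t ∈ T, h * t * (τ h)⁻¹ ∈ T ∧ (τ h)⁻¹ * t * h ∈ T := by
    intro h
    have hmem : h ∈ Subgroup.closure T := by rw [hgen]; trivial
    induction hmem using Subgroup.closure_induction with
    | mem x hx =>
      intro t ht
      have hx' : τ x = x⁻¹ := hT hx
      rw [hx', inv_inv]
      exact ⟨htw x hx t ht, by
        have := htw x hx t ht
        simpa [mul_assoc] using this⟩
    | one => intro t ht; simpa using ht
    | mul a b _ _ ha hb =>
      intro t ht
      constructor
      · have h2 := (hb t ht).1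
        have h1' := (ha _ h2).1
        simpa [mul_assoc] using h1'
      · have h2 := (ha t ht).2
        have h1' := (hb _ h2).2
        simpa [mul_assoc] using h1'
    | inv a _ ha =>
      intro t ht
      constructor
      · have := hinv _ ((ha t⁻¹ (hinv t ht)).2)
        simpa [mul_assoc] using this
      · have := hinv _ ((ha t⁻¹ (hinv t ht)).1)
        simpa [mul_assoc] using this
  apply Set.Subset.antisymm hT
  intro u hu
  obtain ⟨h, hh⟩ := hsq.2 u
  simp only at hh
  have hτh : τ h = h⁻¹ := by
    apply hsq.1
    simp only
    rw [← map_mul, hh, hu, ← hh]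
    group
  have := (key h 1 h1).1
  rw [hτh, inv_inv, mul_one, hh] at this
  exact this
end

section
/- Let (Q,·) be a right Bol loop of odd (finite) order. If the associated right Bruck loop (Q,∘) given by u∘v = ((v·u^2)·v)^{1/2} is associative, then the right multiplication group Mlt_ρ(Q,·) is nilpotent of class at most 2. -/
variable {Q : Type*} [RightBolLoop Q]

/-!
Squaring is a bijection of `Q`: the cyclic group `⟨R_x⟩` consists of right translations, so it
acts freely on `Q` and `R_x ^ |Q| = 1`, whence `R_x = R_{x²} ^ ((|Q| + 1) / 2)`.

An associative Bruck operation makes `(Q, ∘)` a group with inverse `u ↦ u⁻¹`; by the automorphic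
inverse property `(u ∘ v)⁻¹ = u⁻¹ ∘ v⁻¹` this group is abelian. Comparing squares then gives
`R_y R_u R_y = R_{u ∘ y²}`, so conjugation by `R_y` sends `R_u` to `R_{u ∘ y²} R_{y²}⁻¹`, and
conjugation by `R_x R_y` sends it to `R_{u ∘ y² ∘ x²} R_{y² ∘ x²}⁻¹`, which is symmetric in `x` and
`y`. Hence every commutator `[R_x, R_y]` is central in `Mlt_ρ(Q)`, which has class at most 2.
-/

open Subgroup
open scoped commutatorElement

theorem MulAction.card_dvd_card_of_stabilizer_eq_bot {G X : Type*} [Group G] [MulAction G X]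
    [Finite X] (h : ∀ x : X, stabilizer G x = ⊥) : Nat.card G ∣ Nat.card X := by
  classical
  have := Fintype.ofFinite X
  rw [Nat.card_congr (selfEquivSigmaOrbits G X), Nat.card_sigma]
  exact Finset.dvd_sum fun ω _ => by rw [Nat.card_coe_set_eq, ← index_stabilizer, h, index_bot]

theorem Subgroup.commutatorElement_mem_center_of_conj_eq {G : Type*} [Group G] {s t : G}
    (h : MulAut.conj (s * t) = MulAut.conj (t * s)) : ⁅s, t⁆ ∈ center G :=
  mem_center_iff.mpr fun g => by
    have hg : s * t * ((t * s)⁻¹ * g * (t * s)) * (s * t)⁻¹ = g := by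
      simpa [mul_assoc] using DFunLike.congr_fun h ((t * s)⁻¹ * g * (t * s))
    calc g * ⁅s, t⁆ = s * t * ((t * s)⁻¹ * g * (t * s)) * (s * t)⁻¹ * ⁅s, t⁆ := by rw [hg]
      _ = ⁅s, t⁆ * g := by rw [commutatorElement_def]; group

theorem Subgroup.lowerCentralSeries_two_eq_bot_of_commutator_mem_center {G : Type*} [Group G]
    {S : Set G} (hS : closure S = ⊤) (h : ∀ s ∈ S, ∀ t ∈ S, ⁅s, t⁆ ∈ center G) :
    lowerCentralSeries (⊤ : Subgroup G) 2 = ⊥ := by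
  set π := QuotientGroup.mk' (center G)
  have hT : closure (π '' S) = ⊤ := by
    rw [← MonoidHom.map_closure, hS, ← MonoidHom.range_eq_map, QuotientGroup.range_mk']
  have hcenter : center (G ⧸ center G) = ⊤ := by
    rw [eq_top_iff, ← hT, closure_le, center_eq_iInf hT]
    rintro _ ⟨s, hs, rfl⟩
    simp only [SetLike.mem_coe, mem_iInf, mem_centralizer_singleton_iff]
    rintro _ ⟨t, ht, rfl⟩
    rw [← commutatorElement_eq_one_iff_mul_comm, ← map_commutatorElement,
      QuotientGroup.mk'_apply, QuotientGroup.eq_one_iff]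
    exact h s hs t ht
  rw [lowerCentralSeries_eq_bot_iff_upperCentralSeries_eq_top, eq_top_iff]
  refine fun x _ => mem_upperCentralSeries_succ_iff.mpr fun y => ?_
  rw [upperCentralSeries_one, ← QuotientGroup.eq_one_iff, ← QuotientGroup.mk'_apply,
    map_commutatorElement, commutatorElement_eq_one_iff_mul_comm]
  exact mem_center_iff.mp (hcenter ▸ mem_top (π x)) (π y) |>.symm

namespace RightBolLoop

@[simp] theorem Rt_apply (a x : Q) : Rt a x = x * a := rfl

theorem Rt_one : Rt (1 : Q) = 1 :=
  Equiv.ext mul_one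

theorem Rt_injective : Function.Injective (Rt : Q → Equiv.Perm Q) := fun a b h => by
  simpa only [Rt_apply, one_mul] using DFunLike.congr_fun h 1

theorem Rt_mul_Rt_mul_Rt (u v : Q) : Rt u * Rt v * Rt u = Rt ((u * v) * u) :=
  Equiv.ext fun x => rbol x u v

theorem Rt_mul_self (u : Q) : Rt u * Rt u = Rt (u * u) := by
  simpa only [Rt_one, _root_.mul_one, mul_one] using Rt_mul_Rt_mul_Rt u 1

theorem Rt_inv (u : Q) : Rt u⁻¹ = (Rt u)⁻¹ := by
  refine eq_inv_of_mul_eq_one_left (Equiv.ext fun x => ?_)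
  have h := rbol x u u⁻¹
  rw [mul_inv, one_mul] at h
  exact (mulRight_bij u).injective h

theorem mul_mul_self (x u : Q) : x * (u * u) = (x * u) * u := by
  rw [← Rt_apply, ← Rt_mul_self]
  rfl

theorem inv_inv (a : Q) : a⁻¹⁻¹ = a :=
  Rt_injective (by rw [Rt_inv, Rt_inv, _root_.inv_inv])

theorem inv_mul_self (a : Q) : (a * a)⁻¹ = a⁻¹ * a⁻¹ :=
  Rt_injective (by rw [Rt_inv, ← Rt_mul_self, ← Rt_mul_self, Rt_inv, mul_inv_rev])

theorem inv_bol (a b : Q) : ((a * b) * a)⁻¹ = (a⁻¹ * b⁻¹) * a⁻¹ :=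
  Rt_injective (by
    rw [Rt_inv, ← Rt_mul_Rt_mul_Rt, ← Rt_mul_Rt_mul_Rt, Rt_inv, Rt_inv, mul_inv_rev, mul_inv_rev,
      mul_assoc])

theorem Rt_pow_mem_range (x : Q) (n : ℕ) : Rt x ^ n ∈ Set.range Rt := by
  induction n using Nat.twoStepInduction with
  | zero => exact ⟨1, by rw [pow_zero, Rt_one]⟩
  | one => exact ⟨x, (pow_one _).symm⟩
  | more n ih _ =>
    obtain ⟨q, hq⟩ := ih
    exact ⟨(x * q) * x, by rw [← Rt_mul_Rt_mul_Rt, hq, ← pow_succ', ← pow_succ]⟩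

theorem Rt_zpow_mem_range (x : Q) (k : ℤ) : Rt x ^ k ∈ Set.range Rt := by
  cases k with
  | ofNat n => simpa using Rt_pow_mem_range x n
  | negSucc n =>
    obtain ⟨q, hq⟩ := Rt_pow_mem_range x (n + 1)
    exact ⟨q⁻¹, by rw [zpow_negSucc, Rt_inv, hq]⟩

theorem stabilizer_zpowers_Rt_eq_bot (x b : Q) :
    MulAction.stabilizer (zpowers (Rt x)) b = ⊥ := by
  rw [eq_bot_iff]
  rintro ⟨_, k, rfl⟩ hk
  obtain ⟨q, hq⟩ := Rt_zpow_mem_range x k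
  have hq1 : q = 1 := (mulLeft_bij b).injective <| by
    simpa [← hq, mul_one] using hk
  simp [← hq, hq1, Rt_one]

theorem orderOf_Rt_dvd_card [Finite Q] (x : Q) : orderOf (Rt x) ∣ Nat.card Q := by
  rw [← Nat.card_zpowers]
  exact MulAction.card_dvd_card_of_stabilizer_eq_bot (stabilizer_zpowers_Rt_eq_bot x)

theorem mul_self_bijective [Finite Q] (hodd : Odd (Nat.card Q)) :
    Function.Bijective fun z : Q => z * z := by
  obtain ⟨m, hm⟩ := hodd
  have hRt : ∀ z : Q, Rt z = Rt (z * z) ^ (m + 1) := fun z => calc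
    Rt z = Rt z ^ (Nat.card Q + 1) := by
      rw [pow_succ, orderOf_dvd_iff_pow_eq_one.mp (orderOf_Rt_dvd_card z), _root_.one_mul]
    _ = (Rt z * Rt z) ^ (m + 1) := by rw [hm, ← sq, ← pow_mul]; ring_nf
    _ = Rt (z * z) ^ (m + 1) := by rw [Rt_mul_self]
  refine Finite.injective_iff_bijective.mp fun x y hxy => Rt_injective ?_
  rw [hRt x, hRt y]
  exact congrArg (Rt · ^ (m + 1)) hxy

section Bruck

variable (hsq : Function.Bijective fun z : Q => z * z)
include hsq

theorem sqrt2_mul_self (x : Q) : sqrt2 (x * x) = x :=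
  Function.leftInverse_invFun hsq.injective x

theorem bop_mul_self (u v : Q) : bop u v * bop u v = (v * (u * u)) * v :=
  Function.invFun_eq (hsq.surjective _)

theorem bop_one (u : Q) : bop u 1 = u := by
  rw [bop, one_mul, mul_one, sqrt2_mul_self hsq]

theorem one_bop (v : Q) : bop 1 v = v := by
  rw [bop, mul_one, mul_one, sqrt2_mul_self hsq]

theorem bop_inv_self (u : Q) : bop u u⁻¹ = 1 := by
  rw [bop, mul_mul_self, inv_mul, one_mul, mul_inv]
  simpa only [mul_one] using sqrt2_mul_self hsq (1 : Q)

theorem inv_bop (u v : Q) : (bop u v)⁻¹ = bop u⁻¹ v⁻¹ := by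
  apply hsq.injective
  simp only
  rw [bop_mul_self hsq, ← inv_mul_self, bop_mul_self hsq, inv_bol, inv_mul_self]

variable (hassoc : ∀ u v w : Q, bop (bop u v) w = bop u (bop v w))
include hassoc

theorem bop_comm (u v : Q) : bop u v = bop v u := by
  have hinv : ∀ a b : Q, bop b⁻¹ a⁻¹ = bop a⁻¹ b⁻¹ := fun a b => by
    have hleft : bop (bop a b)⁻¹ (bop a b) = 1 := by
      rw [← bop_inv_self hsq (bop a b)⁻¹, inv_inv]
    calc bop b⁻¹ a⁻¹ = bop (bop (bop a b)⁻¹ (bop a b)) (bop b⁻¹ a⁻¹) := by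
          rw [hleft, one_bop hsq]
      _ = bop (bop a b)⁻¹ (bop a (bop (bop b b⁻¹) a⁻¹)) := by rw [hassoc, hassoc, ← hassoc b]
      _ = bop a⁻¹ b⁻¹ := by
          rw [bop_inv_self hsq b, one_bop hsq, bop_inv_self hsq, bop_one hsq, inv_bop hsq]
  simpa only [inv_inv] using hinv v⁻¹ u⁻¹

theorem Rt_mul_Rt_mul_Rt_eq_Rt_bop (y u : Q) : Rt y * Rt u * Rt y = Rt (bop u (y * y)) := by
  rw [Rt_mul_Rt_mul_Rt]
  congr 1
  apply hsq.injective
  refine Rt_injective ?_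
  simp only
  rw [bop_mul_self hsq]
  have hcomm : Rt u * Rt (y * y) * Rt u = Rt y * Rt (u * u) * Rt y := by
    rw [Rt_mul_Rt_mul_Rt, Rt_mul_Rt_mul_Rt, ← bop_mul_self hsq, ← bop_mul_self hsq,
      bop_comm hsq hassoc]
  calc Rt ((y * u) * y * ((y * u) * y))
      = Rt y * (Rt u * Rt (y * y) * Rt u) * Rt y := by
        simp only [← Rt_mul_self, ← Rt_mul_Rt_mul_Rt, mul_assoc]
    _ = Rt ((y * y) * (u * u) * (y * y)) := by
        rw [hcomm]
        simp only [← Rt_mul_self, ← Rt_mul_Rt_mul_Rt, mul_assoc]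

theorem conj_Rt (y u : Q) :
    MulAut.conj (Rt y) (Rt u) = Rt (bop u (y * y)) * (Rt (y * y))⁻¹ := by
  rw [MulAut.conj_apply, ← Rt_mul_Rt_mul_Rt_eq_Rt_bop hsq hassoc, ← Rt_mul_self]
  group

theorem conj_Rt_mul_Rt (x y u : Q) :
    MulAut.conj (Rt x * Rt y) (Rt u)
      = Rt (bop (bop u (y * y)) (x * x)) * (Rt (bop (y * y) (x * x)))⁻¹ := by
  rw [map_mul, MulAut.mul_apply, conj_Rt hsq hassoc, map_mul, map_inv, conj_Rt hsq hassoc,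
    conj_Rt hsq hassoc]
  group

theorem conj_Rt_mul_Rt_eq_conj_Rt_mul_Rt (x y : Q) {g : Equiv.Perm Q}
    (hg : g ∈ closure (Set.range Rt)) :
    MulAut.conj (Rt x * Rt y) g = MulAut.conj (Rt y * Rt x) g := by
  refine MonoidHom.eqOn_closure (f := (MulAut.conj (Rt x * Rt y)).toMonoidHom)
    (g := (MulAut.conj (Rt y * Rt x)).toMonoidHom) ?_ hg
  rintro _ ⟨u, rfl⟩
  simp only [MulEquiv.coe_toMonoidHom]
  rw [conj_Rt_mul_Rt hsq hassoc, conj_Rt_mul_Rt hsq hassoc, hassoc, hassoc,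
    bop_comm hsq hassoc (y * y) (x * x)]

end Bruck

end RightBolLoop

/-- Let `(Q,·)` be a right Bol loop of odd finite order. If the associated
right Bruck loop `(Q,∘)`, `u ∘ v = ((v·u²)·v)^{1/2}`, is associative, then
the right multiplication group `Mlt_ρ(Q,·)` is nilpotent of class at most 2,
i.e. its lower central series reaches the trivial subgroup at step 2. -/
theorem stmt12 [Fintype Q] (hodd : Odd (Fintype.card Q))
    (hassoc : ∀ u v w : Q, bop (bop u v) w = bop u (bop v w)) :
    Subgroup.lowerCentralSeries (⊤ : Subgroup (↥(Subgroup.closure (Set.range (Rt : Q → Equiv.Perm Q))))) 2 = ⊥ := by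
  have hsq := RightBolLoop.mul_self_bijective (Q := Q) (Nat.card_eq_fintype_card (α := Q) ▸ hodd)
  refine lowerCentralSeries_two_eq_bot_of_commutator_mem_center closure_closure_coe_preimage ?_
  rintro s ⟨x, hx⟩ t ⟨y, hy⟩
  refine commutatorElement_mem_center_of_conj_eq (MulEquiv.ext fun g => Subtype.ext ?_)
  simpa [← hx, ← hy] using RightBolLoop.conj_Rt_mul_Rt_eq_conj_Rt_mul_Rt hsq hassoc x y g.2
end

section
/- Let G be a finite nilpotent group and H a core-free subgroup of G (H contains no nontrivial normal subgroup of G). Then for every prime r dividing |G|, there exists a normal subgroup M of G with H ≤ M and [G : M] = r. -/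
/-- Let `G` be a finite nilpotent group and `H` a core-free subgroup of `G`.
Then for every prime `r` dividing `|G|` there is a normal subgroup `M` of `G`
with `H ≤ M` and `[G : M] = r`. -/
theorem stmt13 (G : Type*) [Group G] [Fintype G] (hnil : Group.IsNilpotent G)
    (H : Subgroup G) (hcf : H.normalCore = ⊥)
    (r : ℕ) (hr : r.Prime) (hdvd : r ∣ Fintype.card G) :
    ∃ M : Subgroup G, M.Normal ∧ H ≤ M ∧ M.index = r := by
  classical
  haveI : Fact r.Prime := ⟨hr⟩
  have hcard : r ∣ Nat.card G := by rwa [Nat.card_eq_fintype_card]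
  have hnc : NormalizerCondition G := normalizerCondition_of_isNilpotent
  have hn : ∀ {p : ℕ} [Fact p.Prime] (P : Sylow p G), P.Normal := fun {p} _ P =>
    Sylow.normal_of_normalizerCondition hnc P
  set v : ℕ := (Nat.card G).factorization r with hv
  have hvpos : 0 < v := hr.factorization_pos_of_dvd Nat.card_pos.ne' hcard
  -- the direct product decomposition
  let e := Sylow.directProductOfNormal (G := G) hn
  have hrmem : r ∈ (Nat.card G).primeFactors :=
    Nat.mem_primeFactors.mpr ⟨hr, hcard, Nat.card_pos.ne'⟩
  let φ : G →* (∀ P : Sylow r G, ↥P) :=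
    (Pi.evalMonoidHom _ (⟨r, hrmem⟩ : (Nat.card G).primeFactors)).comp e.symm.toMonoidHom
  have hφsurj : Function.Surjective φ := by
    intro x
    obtain ⟨g, hg⟩ := e.symm.surjective (Pi.mulSingle ⟨r, hrmem⟩ x)
    exact ⟨g, by simp [φ, hg]⟩
  set K : Subgroup G := φ.ker with hK
  letI : Unique (Sylow r G) := Sylow.unique_of_normal default (hn default)
  have hcodom : Nat.card (∀ P : Sylow r G, ↥P) = r ^ v := by
    rw [Nat.card_congr (Equiv.piUnique _)]
    exact Sylow.card_eq_multiplicity (default : Sylow r G)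
  have hKi : K.index = r ^ v := by
    rw [hK, Subgroup.index_ker, MonoidHom.range_eq_top_of_surjective φ hφsurj,
      Subgroup.card_top, hcodom]
  -- H ⊔ K ≠ ⊤
  have hsup : H ⊔ K ≠ ⊤ := by
    intro htop
    have hrel : K.relIndex H = K.index := by
      rw [← Subgroup.relIndex_sup_right, htop, Subgroup.relIndex_top_right]
    have hdvdH : r ^ v ∣ Nat.card H := by
      rw [← hKi, ← hrel]
      exact Dvd.intro_left _ (Subgroup.card_mul_index (K.subgroupOf H))
    have hle : v ≤ (Nat.card H).factorization r :=
      (Nat.Prime.pow_dvd_iff_le_factorization hr Nat.card_pos.ne').mp hdvdH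
    let S : Sylow r H := default
    set S' : Subgroup G := (S : Subgroup H).map H.subtype with hS'
    have hS'card : Nat.card S' = r ^ (Nat.card H).factorization r := by
      rw [← Sylow.card_eq_multiplicity S]
      exact (Nat.card_congr ((S : Subgroup H).equivMapOfInjective H.subtype
        H.subtype_injective).toEquiv).symm
    have hpg : IsPGroup r S' := (S.isPGroup').map H.subtype
    obtain ⟨Q, hQ⟩ := hpg.exists_le_sylow
    have hQcard : Nat.card Q = r ^ v := Sylow.card_eq_multiplicity Q
    have hcards : Nat.card S' = Nat.card (Q : Subgroup G) := by
      refine Nat.dvd_antisymm (Subgroup.card_dvd_of_le hQ) ?_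
      rw [hS'card, hQcard]
      exact pow_dvd_pow r hle
    have hQS' : (Q : Subgroup G) ≤ S' := by
      rw [← Subgroup.subgroupOf_eq_top]
      refine Subgroup.eq_top_of_card_eq _ ?_
      rw [Nat.card_congr (Subgroup.subgroupOfEquivOfLe hQ).toEquiv, hcards]
    have hQH : (Q : Subgroup G) ≤ H := hQS'.trans (Subgroup.map_subtype_le _)
    haveI : (Q : Subgroup G).Normal := hn Q
    have : (Q : Subgroup G) ≤ H.normalCore := Subgroup.normal_le_normalCore.mpr hQH
    rw [hcf, le_bot_iff] at this
    have : Nat.card (Q : Subgroup G) = 1 := by rw [this]; exact Subgroup.card_bot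
    rw [hQcard] at this
    exact absurd this (Nat.one_lt_pow hvpos.ne' hr.one_lt).ne'
  -- take a maximal subgroup containing H ⊔ K
  obtain ⟨M, hM, hle2⟩ := (eq_top_or_exists_le_coatom (H ⊔ K)).resolve_left hsup
  haveI hMnormal : M.Normal := Subgroup.NormalizerCondition.normal_of_coatom M hnc hM
  have hHM : H ≤ M := le_sup_left.trans hle2
  have hKM : K ≤ M := le_sup_right.trans hle2
  have hMdvd : M.index ∣ r ^ v := hKi ▸ Subgroup.index_dvd_of_le hKM
  obtain ⟨j, hjle, hj⟩ := (Nat.dvd_prime_pow hr).mp hMdvd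
  have hj0 : j ≠ 0 := by
    intro h
    rw [h, pow_zero] at hj
    exact hM.1 (Subgroup.index_eq_one.mp hj)
  have hrM : r ^ 1 ∣ Nat.card (G ⧸ M) := by
    rw [pow_one, ← Subgroup.index_eq_card, hj]
    exact dvd_pow_self r hj0
  obtain ⟨T, hT⟩ := Sylow.exists_subgroup_card_pow_prime r hrM
  rw [pow_one] at hT
  set N : Subgroup G := T.comap (QuotientGroup.mk' M) with hN
  have hMN : M ≤ N := by
    intro g hg
    have h1 : QuotientGroup.mk' M g = 1 := (QuotientGroup.eq_one_iff g).mpr hg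
    show QuotientGroup.mk' M g ∈ T
    rw [h1]; exact T.one_mem
  have hmapN : N.map (QuotientGroup.mk' M) = T :=
    Subgroup.map_comap_eq_self_of_surjective (QuotientGroup.mk'_surjective M) T
  rcases hMN.lt_or_eq with hlt | heq
  · have hNtop : N = ⊤ := hM.2 N hlt
    have : T = ⊤ := by
      rw [← hmapN, hNtop]
      exact Subgroup.map_top_of_surjective _ (QuotientGroup.mk'_surjective M)
    rw [this, Subgroup.card_top, ← Subgroup.index_eq_card] at hT
    exact ⟨M, hMnormal, hHM, hT⟩
  · exfalso
    have : T = ⊥ := by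
      rw [← hmapN, ← heq]
      ext x
      simp only [Subgroup.mem_map, Subgroup.mem_bot]
      constructor
      · rintro ⟨g, hg, rfl⟩
        simpa [QuotientGroup.eq_one_iff] using hg
      · rintro rfl
        exact ⟨1, M.one_mem, map_one _⟩
    rw [this, Subgroup.card_bot] at hT
    exact hr.one_lt.ne hT
end

section
/- Let p be an odd prime, let t ∈ F_p be a non-square, represent F_{p^2} = {u + v√t : u, v ∈ F_p}, and let ω be a primitive q-th root of unity in F_{p^2} for an odd prime q dividing p^2 - 1. For γ ∈ F_{p^2}, the element γω + (1-γ)ω^{-1} lies in F_p if and only if: γ ∈ F_p in case q divides p - 1, and γ ∈ 1/2 + F_p√t in case q divides p + 1. -/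
set_option maxHeartbeats 1000000

open Polynomial in

theorem range_eq_fixed {p : ℕ} [Fact p.Prime] {F : Type*} [Field F] [Fintype F] [DecidableEq F]
    (ι : ZMod p →+* F) : Set.range ι = {x : F | x ^ p = x} := by
  have hp := (Fact.out : p.Prime)
  set f : F[X] := X ^ p - X with hf
  have hdeg : f.natDegree = p := by
    rw [hf, natDegree_sub_eq_left_of_natDegree_lt (by simp [hp.one_lt]), natDegree_X_pow]
  have hne : f ≠ 0 := fun h => by rw [h, natDegree_zero] at hdeg; exact hp.ne_zero hdeg.symm
  have hset : {x : F | x ^ p = x} = {x : F | f.IsRoot x} := by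
    ext x; simp [hf, IsRoot, sub_eq_zero]
  have hfin : ({x : F | x ^ p = x}).Finite := hset ▸ finite_setOf_isRoot hne
  apply Set.eq_of_subset_of_ncard_le _ _ hfin
  · rintro _ ⟨a, rfl⟩
    simp only [Set.mem_setOf_eq, ← map_pow, ZMod.pow_card]
  · have h1 : (Set.range ι).ncard = p := by
      rw [← Nat.card_coe_set_eq, Nat.card_range_of_injective ι.injective,
        Nat.card_eq_fintype_card, ZMod.card]
    rw [h1, Set.ncard_eq_toFinset_card _ hfin]
    calc (hfin.toFinset).card ≤ f.roots.toFinset.card := by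
          apply Finset.card_le_card
          intro x hx
          rw [Set.Finite.mem_toFinset] at hx
          rw [Multiset.mem_toFinset, mem_roots hne]
          rw [hset] at hx; exact hx
      _ ≤ Multiset.card f.roots := f.roots.toFinset_card_le
      _ ≤ f.natDegree := f.card_roots'
      _ = p := hdeg



/-- Let `p` be an odd prime, `t ∈ 𝔽_p` a non-square, and represent
`𝔽_{p²} = {u + v√t : u, v ∈ 𝔽_p}` via a ring embedding `ι : 𝔽_p →+* F` and an
element `r = √t` with `r² = ι t`. Let `q` be an odd prime dividing `p² - 1`
and `ω ∈ F` a primitive `q`-th root of unity. Then for `γ ∈ F`, the element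
`γω + (1-γ)ω⁻¹` lies in `𝔽_p` (the image of `ι`) if and only if:
`γ ∈ 𝔽_p` in case `q ∣ p - 1`, and `γ ∈ 1/2 + 𝔽_p√t` in case `q ∣ p + 1`. -/
theorem stmt19 {p q : ℕ} (hp : p.Prime) (hq : q.Prime) (hpo : Odd p)
    (hqo : Odd q) (hdvd : q ∣ p ^ 2 - 1)
    (F : Type*) [Field F] [Fintype F] (hcard : Fintype.card F = p ^ 2)
    (ι : ZMod p →+* F)
    (t : ZMod p) (ht : ¬ ∃ s : ZMod p, s ^ 2 = t)
    (r : F) (hr : r * r = ι t)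
    (ω : F) (hω : orderOf ω = q) (γ : F) :
    ((q ∣ p - 1) →
      ((γ * ω + (1 - γ) * ω⁻¹ ∈ Set.range ι) ↔ γ ∈ Set.range ι)) ∧
    ((q ∣ p + 1) →
      ((γ * ω + (1 - γ) * ω⁻¹ ∈ Set.range ι) ↔
        ∃ m : ZMod p, γ = (2 : F)⁻¹ + ι m * r)) := by
  haveI : Fact p.Prime := ⟨hp⟩
  haveI : DecidableEq F := Classical.decEq F
  have hps : p ≠ 2 := fun h => by simp [h, Nat.odd_iff] at hpo
  haveI hchar : CharP F p := charP_of_injective_ringHom ι.injective p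
  set φ := frobenius F p with hφdef
  have hφ : ∀ x : F, φ x = x ^ p := fun x => rfl
  have hrange : ∀ x : F, x ∈ Set.range ι ↔ φ x = x := by
    intro x
    rw [range_eq_fixed ι, Set.mem_setOf_eq, hφ]
  -- basic facts about ω
  have hq0 : q ≠ 0 := hq.ne_zero
  have hωq : ω ^ q = 1 := by rw [← hω]; exact pow_orderOf_eq_one ω
  have hω0 : ω ≠ 0 := by
    intro h
    rw [h, zero_pow hq0] at hωq
    exact zero_ne_one hωq
  have hne : ω - ω⁻¹ ≠ 0 := by
    rw [sub_ne_zero]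
    intro h
    have h2 : ω ^ 2 = 1 := by
      rw [pow_two]; nth_rewrite 2 [h]; exact mul_inv_cancel₀ hω0
    have := orderOf_dvd_of_pow_eq_one h2
    rw [hω] at this
    have := (Nat.prime_dvd_prime_iff_eq hq Nat.prime_two).mp this
    rw [this, Nat.odd_iff] at hqo
    simp at hqo
  -- 2 ≠ 0 in F
  have hpd : ¬ (p ∣ 2) := by
    intro hd
    have := Nat.le_of_dvd (by norm_num) hd
    have := hp.two_le
    omega
  have h2 : (2 : F) ≠ 0 := by
    rw [show ((2:F)) = ((2:ℕ):F) by norm_num, Ne, CharP.cast_eq_zero_iff F p 2]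
    exact hpd
  -- t and r facts
  have ht0 : t ≠ 0 := fun h => ht ⟨0, by rw [h]; ring⟩
  have hr0 : r ≠ 0 := by
    intro h
    rw [h, mul_zero] at hr
    exact ht0 (ι.injective (by rw [← hr, map_zero]))
  have hφr : φ r = -r := by
    have htpow : t ^ (p / 2) = -1 := by
      have hsq : t ^ (p / 2) * t ^ (p / 2) = 1 := by
        rw [← pow_add]
        have : p / 2 + p / 2 = p - 1 := by
          rw [Nat.odd_iff] at hpo; omega
        rw [this, ZMod.pow_card_sub_one_eq_one ht0]
      rcases mul_self_eq_one_iff.mp hsq with h | h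
      · exfalso
        obtain ⟨s, hs⟩ := (ZMod.euler_criterion p ht0).mpr h
        exact ht ⟨s, by rw [hs]; ring⟩
      · exact h
    have hpe : p = 2 * (p / 2) + 1 := by rw [Nat.odd_iff] at hpo; omega
    rw [hφ]
    calc r ^ p = (r * r) ^ (p / 2) * r := by
          nth_rewrite 1 [hpe]; rw [pow_succ, pow_mul, pow_two]
      _ = ι (t ^ (p / 2)) * r := by rw [hr, map_pow]
      _ = -r := by rw [htpow, map_neg, map_one]; ring
  constructor
  · -- case q ∣ p - 1
    intro h1
    have hωp : φ ω = ω := by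
      have hd : ω ^ (p - 1) = 1 := by
        apply orderOf_dvd_iff_pow_eq_one.mp
        rw [hω]; exact h1
      rw [hφ, show p = (p - 1) + 1 from (Nat.succ_pred_eq_of_pos hp.pos).symm,
        pow_succ, hd, one_mul]
    have hωip : φ ω⁻¹ = ω⁻¹ := by rw [map_inv₀, hωp]
    have hφE : φ (γ * ω + (1 - γ) * ω⁻¹) = φ γ * ω + (1 - φ γ) * ω⁻¹ := by
      rw [map_add, map_mul, map_mul, map_sub, map_one, hωp, hωip]
    rw [hrange, hrange, hφE]
    constructor
    · intro hE
      have key : (φ γ - γ) * (ω - ω⁻¹) = 0 := by linear_combination hE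
      rcases mul_eq_zero.mp key with h | h
      · exact sub_eq_zero.mp h
      · exact absurd h hne
    · intro hg; rw [hg]
  · -- case q ∣ p + 1
    intro h1
    have hωp1 : ω ^ (p + 1) = 1 := by
      apply orderOf_dvd_iff_pow_eq_one.mp
      rw [hω]; exact h1
    have hφω : φ ω = ω⁻¹ := by
      rw [hφ]
      apply eq_inv_of_mul_eq_one_left
      rw [← pow_succ]
      exact hωp1
    have hφωi : φ ω⁻¹ = ω := by rw [map_inv₀, hφω, inv_inv]
    have hφE : φ (γ * ω + (1 - γ) * ω⁻¹) = φ γ * ω⁻¹ + (1 - φ γ) * ω := by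
      rw [map_add, map_mul, map_mul, map_sub, map_one, hφω, hφωi]
    have hhalf : φ (2⁻¹ : F) = 2⁻¹ := by
      rw [map_inv₀, map_ofNat]
    rw [hrange, hφE]
    have step1 : (φ γ * ω⁻¹ + (1 - φ γ) * ω = γ * ω + (1 - γ) * ω⁻¹) ↔ φ γ = 1 - γ := by
      constructor
      · intro hE
        have key : (1 - γ - φ γ) * (ω - ω⁻¹) = 0 := by linear_combination hE
        rcases mul_eq_zero.mp key with h | h
        · linear_combination -h
        · exact absurd h hne
      · intro hg; rw [hg]; ring
    rw [step1]
    constructor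
    · intro hg
      set v := (γ - 2⁻¹) * r⁻¹ with hv
      have hφv : φ v = v := by
        rw [hv, map_mul, map_sub, hhalf, map_inv₀, hφr, hg]
        field_simp
        ring
      obtain ⟨m, hm⟩ := (hrange v).mpr hφv
      refine ⟨m, ?_⟩
      rw [hm, hv]
      field_simp
      ring
    · rintro ⟨m, rfl⟩
      have hfix : φ (ι m) = ι m := (hrange _).mp ⟨m, rfl⟩
      rw [map_add, map_mul, hhalf, hfix, hφr]
      field_simp
      ring
end
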